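/- arXiv:2504.01486 — 2 statements merged into one kernel-verified Lean document; each statement's English description precedes it below -/
import Mathlib

section
/- Let x be the output of Algorithm FractionalKnapsack with sample size t ∈ {1,…,n−1}, where the permutation π is chosen uniformly at random among all permutations of [n]. Then for every item j ∈ [n], E[x_j] ≥ (x̃_j([n])/n) · Σ_{ℓ=t+1}^n t/(ℓ−1), where x̃([n]) is the fractional greedy solution of all n items. -/
/-- The fractional greedy solution of the sub-instance on item set `Q`:
since the densities are strictly decreasing in the index, the items of `Q` are
packed greedily in increasing index order (= decreasing density order) until the
capacity `C` is exhausted; the first item that does not fully fit is packed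
fractionally, all later items of `Q` get fraction `0`, and items outside `Q` get `0`. -/
noncomputable def greedySol (n : ℕ) (C : ℝ) (s : Fin n → ℝ) (Q : Finset (Fin n)) (j : Fin n) : ℝ :=
  if j ∈ Q then
    (min C (∑ k ∈ Q.filter (fun k => k ≤ j), s k)
      - min C (∑ k ∈ Q.filter (fun k => k < j), s k)) / s j
  else 0

/-- `Qset π ℓ` is the set `Q_ℓ` of items revealed in the first `ℓ` rounds
(rounds are indexed `0,…,n−1`, so round `ℓ₀ : Fin n` is round `ℓ₀+1` in 1-based counting). -/
def Qset (n : ℕ) (π : Equiv.Perm (Fin n)) (ℓ : ℕ) : Finset (Fin n) :=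
  (Finset.univ.filter (fun k : Fin n => (k : ℕ) < ℓ)).image π

/-- The output of Algorithm `FractionalKnapsack` with sample size `t`:
`x_{π(ℓ)} = 0` for the sample rounds `ℓ ≤ t` (0-based: rounds `< t`) and, for a later
round `ℓ`, `x_{π(ℓ)} = x̃_{π(ℓ)}(Q_ℓ) − (1/s_{π(ℓ)}) Σ_{k=t+1}^{ℓ−1} s_{π(k)} (x̃_{π(k)}(Q_{ℓ−1}) − x̃_{π(k)}(Q_ℓ))`. -/
noncomputable def algFK (n : ℕ) (C : ℝ) (s : Fin n → ℝ) (π : Equiv.Perm (Fin n)) (t : ℕ)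
    (j : Fin n) : ℝ :=
  if (π.symm j : ℕ) < t then 0 else
    greedySol n C s (Qset n π ((π.symm j : ℕ) + 1)) j
      - (∑ k ∈ Finset.univ.filter
            (fun k : Fin n => t ≤ (k : ℕ) ∧ (k : ℕ) < (π.symm j : ℕ)),
          s (π k) * (greedySol n C s (Qset n π (π.symm j : ℕ)) (π k)
            - greedySol n C s (Qset n π ((π.symm j : ℕ) + 1)) (π k))) / s j

/-!
Condition on the round `ℓ` (counted from `0`) in which item `j` arrives; each round `ℓ < n` is
hit by `(n-1)!` permutations, and rounds `ℓ < t` contribute `0`. Within such a fiber the items of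
any two earlier rounds are exchangeable, so every earlier round loses the same total size `c` to
the arrival of `j`. Since the greedy solution always fills `min C (∑ s)`, adding `j` displaces at
most the size `s_j x̃_j(Q_{ℓ+1})` it occupies itself, whence `ℓ c ≤ s_j S` with `S` the fiber sum
of `x̃_j(Q_{ℓ+1})`. The algorithm charges `j` only for the `ℓ - t` non-sample rounds, leaving at
least `(t/ℓ) S`, and `x̃_j(Q_{ℓ+1}) ≥ x̃_j([n])` because a greedy fraction can only shrink when
items are added.
-/

open Finset Equiv

lemma min_add_sub_min_le_of_le {a A B : ℝ} (C : ℝ) (ha : 0 ≤ a) (hAB : A ≤ B) :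
    min C (B + a) - min C B ≤ min C (A + a) - min C A := by
  rcases min_cases C (B + a) with h₁ | h₁ <;> rcases min_cases C B with h₂ | h₂ <;>
    rcases min_cases C (A + a) with h₃ | h₃ <;> rcases min_cases C A with h₄ | h₄ <;> linarith

section Greedy

variable {n : ℕ} {C : ℝ} {s : Fin n → ℝ} {Q Q' : Finset (Fin n)} {j : Fin n}

lemma greedySol_of_mem (hj : j ∈ Q) :
    greedySol n C s Q j = (min C (∑ k ∈ Q with k < j, s k + s j)
      - min C (∑ k ∈ Q with k < j, s k)) / s j := by
  have hle : Q.filter (· ≤ j) = insert j (Q.filter (· < j)) := by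
    ext k
    simp only [mem_filter, mem_insert, le_iff_lt_or_eq]
    grind
  rw [greedySol, if_pos hj, hle, sum_insert (by simp), add_comm]

lemma greedySol_anti (hs : ∀ i, 0 ≤ s i) (hQ : Q ⊆ Q') (hj : j ∈ Q) :
    greedySol n C s Q' j ≤ greedySol n C s Q j := by
  rw [greedySol_of_mem hj, greedySol_of_mem (hQ hj)]
  refine div_le_div_of_nonneg_right (min_add_sub_min_le_of_le C (hs j) ?_) (hs j)
  exact sum_le_sum_of_subset_of_nonneg (filter_subset_filter _ hQ) fun i _ _ ↦ hs i

lemma greedySol_insert_of_lt {a i : Fin n} (ha : ∀ k ∈ Q, k < a) (hi : i ∈ Q) :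
    greedySol n C s (insert a Q) i = greedySol n C s Q i := by
  simp only [greedySol, hi, mem_insert_of_mem hi, if_true, filter_insert,
    if_neg (ha i hi).not_ge, if_neg (ha i hi).asymm]

lemma greedySol_insert_max {a : Fin n} (ha : ∀ k ∈ Q, k < a) :
    greedySol n C s (insert a Q) a
      = (min C (∑ k ∈ Q, s k + s a) - min C (∑ k ∈ Q, s k)) / s a := by
  rw [greedySol_of_mem (mem_insert_self a Q), filter_insert, if_neg (lt_irrefl a),
    filter_true_of_mem ha]

lemma sum_mul_greedySol (hC : 0 ≤ C) (hs : ∀ i, s i ≠ 0) (Q : Finset (Fin n)) :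
    ∑ i ∈ Q, s i * greedySol n C s Q i = min C (∑ i ∈ Q, s i) := by
  induction Q using Finset.induction_on_max with
  | empty => simp [hC]
  | insert a Q ha ih =>
    have haQ : a ∉ Q := fun h ↦ lt_irrefl a (ha a h)
    rw [sum_insert haQ, greedySol_insert_max ha, mul_div_cancel₀ _ (hs a),
      sum_congr rfl fun i hi ↦ congrArg (s i * ·) (greedySol_insert_of_lt ha hi), ih,
      sum_insert haQ, add_comm (s a), sub_add_cancel]

lemma sum_mul_greedySol_erase_sub_le (hC : 0 ≤ C) (hs : ∀ i, 0 < s i) (hj : j ∈ Q) :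
    ∑ i ∈ Q.erase j, s i * (greedySol n C s (Q.erase j) i - greedySol n C s Q i)
      ≤ s j * greedySol n C s Q j := by
  have hs' : ∀ i, s i ≠ 0 := fun i ↦ (hs i).ne'
  have hfill := sum_mul_greedySol hC hs' Q
  rw [← add_sum_erase _ _ hj] at hfill
  have hmono : min C (∑ i ∈ Q.erase j, s i) ≤ min C (∑ i ∈ Q, s i) :=
    min_le_min_left _ (sum_le_sum_of_subset_of_nonneg (erase_subset j Q) fun i _ _ ↦ (hs i).le)
  simp only [mul_sub, sum_sub_distrib, sum_mul_greedySol hC hs' (Q.erase j)]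
  linarith

end Greedy

section Arrival

variable {n : ℕ} {π : Perm (Fin n)} {m ℓ : ℕ} {j : Fin n}

lemma mem_Qset {i : Fin n} : i ∈ Qset n π m ↔ (π.symm i : ℕ) < m := by
  simp only [Qset, mem_image, mem_filter, mem_univ, true_and]
  exact ⟨by rintro ⟨k, hk, rfl⟩; simpa, fun h ↦ ⟨_, h, π.apply_symm_apply i⟩⟩

lemma Qset_mul_swap {k₁ k₂ : Fin n} (h₁ : (k₁ : ℕ) < m) (h₂ : (k₂ : ℕ) < m) :
    Qset n (π * swap k₁ k₂) m = Qset n π m := by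
  ext i
  simp only [mem_Qset, Perm.mul_def, symm_trans_apply, symm_swap, swap_apply_def]
  split_ifs with h h' <;> simp_all

lemma Qset_succ (h : (π.symm j : ℕ) = ℓ) : Qset n π (ℓ + 1) = insert j (Qset n π ℓ) := by
  ext i
  simp only [mem_insert, mem_Qset]
  constructor
  · intro hi
    rcases Nat.lt_succ_iff_lt_or_eq.1 hi with hi | hi
    · exact Or.inr hi
    · exact Or.inl (π.symm.injective (Fin.ext (hi.trans h.symm)))
  · rintro (rfl | hi) <;> omega

lemma card_filter_perm_apply_eq {α : Type*} [Fintype α] [DecidableEq α] (a b : α) :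
    #{π : Perm α | π a = b} = (Fintype.card α - 1).factorial := by
  have hconst : ∀ c, #{π : Perm α | π a = c} = #{π : Perm α | π a = b} := fun c ↦
    card_nbij' (swap c b * ·) (swap c b * ·) (fun π hπ ↦ by simp_all)
      (fun π hπ ↦ by simp_all)
      (fun π _ ↦ by simp [← mul_assoc]) (fun π _ ↦ by simp [← mul_assoc])
  have htotal := card_eq_sum_card_fiberwise (f := fun π : Perm α ↦ π a) (s := univ) (t := univ)
    (fun _ _ ↦ mem_univ _)
  simp only [card_univ, Fintype.card_perm, hconst, sum_const, smul_eq_mul] at htotal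
  have hα : 0 < Fintype.card α := Fintype.card_pos_iff.2 ⟨a⟩
  rw [← Nat.mul_factorial_pred hα.ne'] at htotal
  exact (Nat.eq_of_mul_eq_mul_left hα htotal).symm

def arrivalFiber (n : ℕ) (j : Fin n) (ℓ : ℕ) : Finset (Perm (Fin n)) :=
  {π | (π.symm j : ℕ) = ℓ}

lemma card_arrivalFiber (hℓ : ℓ < n) : #(arrivalFiber n j ℓ) = (n - 1).factorial := by
  have hfiber : arrivalFiber n j ℓ = univ.filter fun π : Perm (Fin n) ↦ π ⟨ℓ, hℓ⟩ = j :=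
    filter_congr fun π _ ↦
      (Fin.ext_iff (b := ⟨ℓ, hℓ⟩)).symm.trans (π.symm_apply_eq.trans eq_comm)
  rw [hfiber, card_filter_perm_apply_eq, Fintype.card_fin]

lemma card_filter_le_val_and_val_lt {t : ℕ} (hℓ : ℓ ≤ n) :
    #{k : Fin n | t ≤ (k : ℕ) ∧ (k : ℕ) < ℓ} = ℓ - t := by
  rw [← card_map Fin.valEmbedding, ← Nat.card_Ico]
  congr 1
  ext m
  simp only [mem_map, mem_filter, mem_univ, true_and, Fin.valEmbedding_apply, mem_Ico]
  exact ⟨by rintro ⟨k, hk, rfl⟩; exact hk, fun hm ↦ ⟨⟨m, by omega⟩, hm, rfl⟩⟩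

end Arrival

section Displacement

variable {n : ℕ} {C : ℝ} {s : Fin n → ℝ} {π : Perm (Fin n)} {t ℓ : ℕ} {j : Fin n}

noncomputable def displacement (n : ℕ) (C : ℝ) (s : Fin n → ℝ) (π : Perm (Fin n)) (ℓ : ℕ)
    (k : Fin n) : ℝ :=
  s (π k) * (greedySol n C s (Qset n π ℓ) (π k) - greedySol n C s (Qset n π (ℓ + 1)) (π k))

lemma algFK_of_le (hj : (π.symm j : ℕ) = ℓ) (htℓ : t ≤ ℓ) :
    algFK n C s π t j = greedySol n C s (Qset n π (ℓ + 1)) j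
      - (∑ k ∈ univ.filter (fun k : Fin n ↦ t ≤ (k : ℕ) ∧ (k : ℕ) < ℓ),
          displacement n C s π ℓ k) / s j := by
  subst hj
  rw [algFK, if_neg (not_lt.2 htℓ)]
  rfl

lemma sum_displacement_le (hC : 0 ≤ C) (hs : ∀ i, 0 < s i) (hj : (π.symm j : ℕ) = ℓ) :
    ∑ k ∈ univ.filter (fun k : Fin n ↦ (k : ℕ) < ℓ), displacement n C s π ℓ k
      ≤ s j * greedySol n C s (Qset n π (ℓ + 1)) j := by
  have hsucc := Qset_succ hj
  have hjQ : j ∈ Qset n π (ℓ + 1) := hsucc ▸ mem_insert_self j _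
  have herase : (Qset n π (ℓ + 1)).erase j = Qset n π ℓ := by
    rw [hsucc, erase_insert (by simp [mem_Qset, hj])]
  have hloss := sum_mul_greedySol_erase_sub_le hC hs hjQ
  rw [herase] at hloss
  refine le_of_eq_of_le (Eq.symm ?_) hloss
  exact sum_image fun _ _ _ _ h ↦ π.injective h

/-- Right multiplication by `swap k₁ k₂` maps the fiber onto itself and exchanges the items of
rounds `k₁` and `k₂` without changing `Q_ℓ` or `Q_{ℓ+1}`. -/
lemma sum_arrivalFiber_displacement_eq {k₁ k₂ : Fin n} (h₁ : (k₁ : ℕ) < ℓ) (h₂ : (k₂ : ℕ) < ℓ) :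
    ∑ π ∈ arrivalFiber n j ℓ, displacement n C s π ℓ k₁
      = ∑ π ∈ arrivalFiber n j ℓ, displacement n C s π ℓ k₂ := by
  have hmaps : ∀ π ∈ arrivalFiber n j ℓ, π * swap k₁ k₂ ∈ arrivalFiber n j ℓ := by
    intro π hπ
    simp only [arrivalFiber, mem_filter, mem_univ, true_and] at hπ ⊢
    have hne : ∀ k : Fin n, (k : ℕ) < ℓ → π.symm j ≠ k := fun k hk h ↦ by rw [h] at hπ; omega
    rwa [Perm.mul_def, symm_trans_apply, symm_swap, swap_apply_of_ne_of_ne (hne k₁ h₁) (hne k₂ h₂)]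
  have hinv : ∀ π : Perm (Fin n), π * swap k₁ k₂ * swap k₁ k₂ = π := fun π ↦ by
    rw [mul_assoc, swap_mul_self, mul_one]
  refine sum_nbij' (· * swap k₁ k₂) (· * swap k₁ k₂) hmaps hmaps (fun π _ ↦ hinv π)
    (fun π _ ↦ hinv π) fun π _ ↦ ?_
  rw [displacement, displacement, Qset_mul_swap h₁ h₂,
    Qset_mul_swap (Nat.lt_succ_of_lt h₁) (Nat.lt_succ_of_lt h₂), Perm.mul_apply, swap_apply_right]

lemma mul_sum_greedySol_le_sum_algFK (hC : 0 ≤ C) (hs : ∀ i, 0 < s i) (ht : 0 < t)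
    (htℓ : t ≤ ℓ) (hℓ : ℓ < n) :
    (t / ℓ : ℝ) * ∑ π ∈ arrivalFiber n j ℓ, greedySol n C s (Qset n π (ℓ + 1)) j
      ≤ ∑ π ∈ arrivalFiber n j ℓ, algFK n C s π t j := by
  set A := arrivalFiber n j ℓ
  have hA : ∀ π ∈ A, (π.symm j : ℕ) = ℓ := fun π hπ ↦ (mem_filter.1 hπ).2
  have hk₀ : ((⟨0, by omega⟩ : Fin n) : ℕ) < ℓ := ht.trans_le htℓ
  set S := ∑ π ∈ A, greedySol n C s (Qset n π (ℓ + 1)) j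
  set c := ∑ π ∈ A, displacement n C s π ℓ ⟨0, by omega⟩
  have hcount : ∀ p : Fin n → Prop, [DecidablePred p] → (∀ k, p k → (k : ℕ) < ℓ) →
      ∑ π ∈ A, ∑ k ∈ univ.filter p, displacement n C s π ℓ k = #(univ.filter p) * c := by
    intro p _ hp
    rw [sum_comm, sum_congr rfl fun k hk ↦ sum_arrivalFiber_displacement_eq
      (hp k (mem_filter.1 hk).2) hk₀, sum_const, nsmul_eq_mul]
  have hall : (ℓ : ℝ) * c ≤ s j * S := by
    have hsum := hcount (fun k ↦ (k : ℕ) < ℓ) fun _ ↦ id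
    rw [Fin.card_filter_val_lt, min_eq_right hℓ.le] at hsum
    rw [← hsum, mul_sum]
    exact sum_le_sum fun π hπ ↦ sum_displacement_le hC hs (hA π hπ)
  have hfiber : ∑ π ∈ A, algFK n C s π t j = S - (ℓ - t) * c / s j := by
    rw [sum_congr rfl fun π hπ ↦ algFK_of_le (hA π hπ) htℓ, sum_sub_distrib, ← sum_div,
      hcount _ fun _ hk ↦ hk.2, card_filter_le_val_and_val_lt hℓ.le, Nat.cast_sub htℓ]
  have hℓpos : (0 : ℝ) < ℓ := by exact_mod_cast ht.trans_le htℓ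
  have hc : c / s j ≤ S / ℓ := by
    rw [div_le_div_iff₀ (hs j) hℓpos]
    linarith
  have htℓ' : (t : ℝ) ≤ ℓ := by exact_mod_cast htℓ
  calc (t / ℓ : ℝ) * S = S - (ℓ - t) * (S / ℓ) := by field_simp; ring
    _ ≤ S - (ℓ - t) * (c / s j) := by gcongr
    _ = ∑ π ∈ A, algFK n C s π t j := by rw [hfiber, mul_div_assoc]

lemma mul_greedySol_univ_le_sum_algFK (hC : 0 ≤ C) (hs : ∀ i, 0 < s i) (ht : 0 < t)
    (htℓ : t ≤ ℓ) (hℓ : ℓ < n) :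
    (t / ℓ : ℝ) * (n - 1).factorial * greedySol n C s univ j
      ≤ ∑ π ∈ arrivalFiber n j ℓ, algFK n C s π t j := by
  have hanti : ∀ π ∈ arrivalFiber n j ℓ,
      greedySol n C s univ j ≤ greedySol n C s (Qset n π (ℓ + 1)) j := fun π hπ ↦
    greedySol_anti (fun i ↦ (hs i).le) (subset_univ _)
      ((Qset_succ (mem_filter.1 hπ).2).symm ▸ mem_insert_self j _)
  calc (t / ℓ : ℝ) * (n - 1).factorial * greedySol n C s univ j
      = (t / ℓ : ℝ) * ∑ _π ∈ arrivalFiber n j ℓ, greedySol n C s univ j := by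
        rw [sum_const, card_arrivalFiber hℓ, nsmul_eq_mul, mul_assoc]
    _ ≤ (t / ℓ : ℝ) * ∑ π ∈ arrivalFiber n j ℓ, greedySol n C s (Qset n π (ℓ + 1)) j := by
        gcongr with π hπ
        exact hanti π hπ
    _ ≤ _ := mul_sum_greedySol_le_sum_algFK hC hs ht htℓ hℓ

end Displacement

theorem algFK_expected_fraction_bound_general
    (n : ℕ) (C : ℝ) (hC : 0 < C)
    (s : Fin n → ℝ)
    (hs : ∀ j, 0 < s j ∧ s j ≤ C)
    (t : ℕ) (ht1 : 1 ≤ t) (j : Fin n) :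
    (∑ π : Equiv.Perm (Fin n), algFK n C s π t j) / (n.factorial : ℝ)
      ≥ (greedySol n C s Finset.univ j / n)
          * ∑ ℓ ∈ Finset.Icc (t + 1) n, (t : ℝ) / ((ℓ : ℝ) - 1) := by
  have hs' : ∀ i, 0 < s i := fun i ↦ (hs i).1
  have hn : 0 < n := j.pos
  have hfibers : ∑ π : Perm (Fin n), algFK n C s π t j
      = ∑ ℓ ∈ Ico t n, ∑ π ∈ arrivalFiber n j ℓ, algFK n C s π t j := by
    rw [← sum_fiberwise_of_maps_to (g := fun π : Perm (Fin n) ↦ (π.symm j : ℕ))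
      fun π _ ↦ mem_range.2 (π.symm j).isLt]
    refine (sum_subset (fun ℓ hℓ ↦ mem_range.2 (mem_Ico.1 hℓ).2) fun ℓ hℓn hℓ ↦ ?_).symm
    refine sum_eq_zero fun π hπ ↦ if_pos ?_
    rw [(mem_filter.1 hπ).2]
    simp only [mem_range, mem_Ico] at hℓn hℓ
    omega
  have hreindex : ∑ ℓ ∈ Icc (t + 1) n, (t : ℝ) / ((ℓ : ℝ) - 1) = ∑ ℓ ∈ Ico t n, (t : ℝ) / ℓ := by
    rw [← Ico_add_one_right_eq_Icc, ← sum_Ico_add' (c := 1)]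
    simp
  rw [ge_iff_le, hreindex, hfibers, le_div_iff₀ (by positivity), ← Nat.mul_factorial_pred hn.ne',
    Nat.cast_mul, mul_sum, sum_mul]
  refine sum_le_sum fun ℓ hℓ ↦ le_of_eq_of_le ?_ (mul_greedySol_univ_le_sum_algFK hC.le hs' (by omega)
    (mem_Ico.1 hℓ).1 (mem_Ico.1 hℓ).2)
  field_simp

/-- Let `x` be the output of Algorithm `FractionalKnapsack` with
sample size `t ∈ {1,…,n−1}`, where the permutation `π` is chosen uniformly at random
among all `n!` permutations of `[n]`. Then for every item `j`,
`E[x_j] ≥ (x̃_j([n])/n) · Σ_{ℓ=t+1}^n t/(ℓ−1)`, where `x̃([n])` is the fractional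
greedy solution of all `n` items. -/
theorem algFK_expected_fraction_bound
    (n : ℕ) (C : ℝ) (hC : 0 < C)
    (v s : Fin n → ℝ)
    (hv : ∀ j, 0 < v j) (hs : ∀ j, 0 < s j ∧ s j ≤ C)
    (hd : ∀ j k : Fin n, j < k → v k / s k < v j / s j)
    (t : ℕ) (ht1 : 1 ≤ t) (ht2 : t < n) (j : Fin n) :
    (∑ π : Equiv.Perm (Fin n), algFK n C s π t j) / (n.factorial : ℝ)
      ≥ (greedySol n C s Finset.univ j / n)
          * ∑ ℓ ∈ Finset.Icc (t + 1) n, (t : ℝ) / ((ℓ : ℝ) - 1) :=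
  algFK_expected_fraction_bound_general n C hC s hs t ht1 j
end

section
/- Let x be the output of Algorithm InfeasibleGAP with sample size t = ⌊n/2⌋, where the permutation π of [n] is uniform at random and the bin choices R_{t+1},…,R_n are, conditionally on π, independent with P(R_ℓ = i) = x̃_{i,π(ℓ)}(Q_ℓ) for i ∈ [m] and P(R_ℓ = 0) = 1 − Σ_{i=1}^m x̃_{i,π(ℓ)}(Q_ℓ). Then E[v(x)] ≥ (1 − ln 2) · v(x*), where x* is an optimal integral feasible assignment. -/
/-- The value `v(x) = Σ_i Σ_j v_{i,j} x_{i,j}` of an assignment. -/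
def gapVal (m n : ℕ) (v : Fin m → Fin n → ℝ) (x : Fin m → Fin n → ℝ) : ℝ :=
  ∑ i, ∑ j, v i j * x i j

/-- `x` is a feasible fractional assignment of the items in `Q`: all entries are
nonnegative, every bin respects its capacity, every item is assigned at most once,
and only items of `Q` are assigned. -/
def gapFeasibleOn (m n : ℕ) (C : Fin m → ℝ) (s : Fin m → Fin n → ℝ)
    (x : Fin m → Fin n → ℝ) (Q : Finset (Fin n)) : Prop :=
  (∀ i j, 0 ≤ x i j) ∧
  (∀ i, ∑ j, s i j * x i j ≤ C i) ∧
  (∀ j, ∑ i, x i j ≤ 1) ∧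
  (∀ i j, j ∉ Q → x i j = 0)

/-- `x` is an integral (0/1) assignment. -/
def gapIntegral (m n : ℕ) (x : Fin m → Fin n → ℝ) : Prop :=
  ∀ i j, x i j = 0 ∨ x i j = 1
/-- `Qset π ℓ` is the set of items revealed in the first `ℓ` rounds
(rounds are 0-indexed `0,…,n−1`). -/
def QsetG (n : ℕ) (π : Equiv.Perm (Fin n)) (ℓ : ℕ) : Finset (Fin n) :=
  (Finset.univ.filter (fun k : Fin n => (k : ℕ) < ℓ)).image π

/-- Algorithm `InfeasibleGAP`: `infAlg … ℓ` is the assignment after the first `ℓ`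
rounds. Nothing is assigned during the sample rounds (0-indexed rounds `< t`); in a
later round `ℓ`, if the bin choice is `R ℓ = some i` and the total size assigned to
bin `i` so far is at most `C i`, item `π ℓ` is assigned to bin `i` (so each bin's
capacity may be exceeded by at most one item). -/
noncomputable def infAlg (m n : ℕ) (C : Fin m → ℝ) (s : Fin m → Fin n → ℝ)
    (t : ℕ) (π : Equiv.Perm (Fin n)) (R : Fin n → Option (Fin m)) :
    ℕ → Fin m → Fin n → ℝ
  | 0 => fun _ _ => 0
  | (ℓ + 1) =>
      let X := infAlg m n C s t π R ℓ
      if h : t ≤ ℓ ∧ ℓ < n then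
        (R ⟨ℓ, h.2⟩).elim X (fun i =>
          if ∑ j, s i j * X i j ≤ C i then
            (fun i' j' => if i' = i ∧ j' = π ⟨ℓ, h.2⟩ then 1 else X i' j')
          else X)
      else X

/-- Algorithms `FeasibleGAP` and `ImitativeGAP`, run together: `fzAlg … ℓ = (y, z)`
after the first `ℓ` rounds. `FeasibleGAP` assigns item `π ℓ` to bin `i = R ℓ` only if
the capacity is respected *after* the assignment; `ImitativeGAP` maintains the same
imitative assignment `y` and assigns to each bin `i` only the first item whose
tentative assignment to `i` would violate the capacity in `y`. -/
noncomputable def fzAlg (m n : ℕ) (C : Fin m → ℝ) (s : Fin m → Fin n → ℝ)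
    (t : ℕ) (π : Equiv.Perm (Fin n)) (R : Fin n → Option (Fin m)) :
    ℕ → ((Fin m → Fin n → ℝ) × (Fin m → Fin n → ℝ))
  | 0 => (fun _ _ => 0, fun _ _ => 0)
  | (ℓ + 1) =>
      let YZ := fzAlg m n C s t π R ℓ
      if h : t ≤ ℓ ∧ ℓ < n then
        (R ⟨ℓ, h.2⟩).elim YZ (fun i =>
          if s i (π ⟨ℓ, h.2⟩) + ∑ j, s i j * YZ.1 i j ≤ C i then
            ((fun i' j' => if i' = i ∧ j' = π ⟨ℓ, h.2⟩ then 1 else YZ.1 i' j'), YZ.2)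
          else if ∀ k ∈ Finset.univ.filter (fun k : Fin n => (k : ℕ) < ℓ),
              YZ.2 i (π k) = 0 then
            (YZ.1, (fun i' j' => if i' = i ∧ j' = π ⟨ℓ, h.2⟩ then 1 else YZ.2 i' j'))
          else YZ)
      else YZ

/-- The probability weight of a vector of bin choices `R` given the permutation `π`:
in each round `ℓ` after the sample (0-indexed `ℓ ≥ t`), independently,
`P(R ℓ = some i) = x̃_{i,π(ℓ)}(Q_ℓ)` and `P(R ℓ = none) = 1 − Σ_i x̃_{i,π(ℓ)}(Q_ℓ)`;
during the sample rounds the choice is irrelevant and forced to `none`. -/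
noncomputable def binWeight (m n : ℕ) (xt : Finset (Fin n) → Fin m → Fin n → ℝ)
    (t : ℕ) (π : Equiv.Perm (Fin n)) (R : Fin n → Option (Fin m)) : ℝ :=
  ∏ ℓ : Fin n,
    if (ℓ : ℕ) < t then (if R ℓ = none then 1 else 0)
    else
      (R ℓ).elim (1 - ∑ i, xt (QsetG n π ((ℓ : ℕ) + 1)) i (π ℓ))
        (fun i => xt (QsetG n π ((ℓ : ℕ) + 1)) i (π ℓ))

/-!
The value of `x` is the sum of the gains of the rounds `ℓ ≥ t`. Round `ℓ` proposes bin `i` with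
probability `x̃_{i,π(ℓ)}(Q_ℓ)`, and the bin accepts whenever its load, which is at most the total
size proposed to it in the rounds `t, …, ℓ-1`, is at most `C_i`; so the gain of the round is at
least `v_{i,π(ℓ)} (1 - proposed load / C_i)`. As the choices are independent given `π`, the
expectation of this bound involves only first and second moments of `x̃`, and random order controls
both. Given `Q_{k+1}` and the later rounds, `π(k)` is uniform on `Q_{k+1}`, where `x̃(Q_{k+1})`
fills bin `i` to at most `C_i`: a round `k < ℓ` costs round `ℓ` at most a factor `1/(k+1)`. And
`x̃(Q_ℓ)` is worth at least the restriction of `x*` to `Q_ℓ`, so the item of round `ℓ` is worth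
`v(x*)/n` on average. Round `ℓ` thus contributes at least `(1 - Σ_{k=t+1}^{ℓ} 1/k) v(x*)/n`, and
for `t = ⌊n/2⌋` these factors add up to at least `(1 - ln 2) n` because `Σ_{k=t+1}^{2t} 1/k ≤ ln 2`.
-/

open Finset Equiv

section Harmonic

open Real

lemma sum_Ico_inv_le_log_sub_log {a b : ℕ} (ha : 0 < a) (hab : a ≤ b) :
    ∑ k ∈ Ico a b, (1 : ℝ) / (k + 1) ≤ log b - log a := by
  induction b, hab using Nat.le_induction with
  | base => simp
  | succ b hab ih =>
    have hb : (0 : ℝ) < b := by exact_mod_cast ha.trans_le hab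
    have hstep : 1 / ((b : ℝ) + 1) ≤ log (b + 1) - log b := by
      have h := one_sub_inv_le_log_of_pos (x := (b + 1) / b) (by positivity)
      rw [log_div (by positivity) hb.ne', inv_div] at h
      convert h using 1
      field_simp
      ring
    rw [sum_Ico_succ_top hab]
    push_cast
    linarith

lemma sum_Ico_inv_le_log_two (t : ℕ) : ∑ k ∈ Ico t (2 * t), (1 : ℝ) / (k + 1) ≤ log 2 := by
  rcases t.eq_zero_or_pos with rfl | ht
  · simpa using log_nonneg one_le_two
  · calc ∑ k ∈ Ico t (2 * t), (1 : ℝ) / (k + 1) ≤ log ↑(2 * t) - log t :=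
          sum_Ico_inv_le_log_sub_log ht (by omega)
      _ = log 2 := by
          push_cast
          rw [log_mul two_ne_zero (by positivity)]
          ring

/-- The factor `1 - Σ_{k=t+1}^{ℓ} 1/k` by which round `ℓ` (0-indexed) contributes. -/
noncomputable def roundFactor (t ℓ : ℕ) : ℝ := 1 - ∑ k ∈ Ico t ℓ, (1 : ℝ) / (k + 1)

lemma sum_roundFactor {t n : ℕ} (htn : t ≤ n) :
    ∑ ℓ ∈ Ico t n, roundFactor t ℓ = 2 * ((n : ℝ) - t) - n * ∑ k ∈ Ico t n, (1 : ℝ) / (k + 1) := by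
  induction n, htn using Nat.le_induction with
  | base => simp
  | succ n htn ih =>
    rw [sum_Ico_succ_top htn, sum_Ico_succ_top htn, ih, roundFactor]
    push_cast
    field_simp
    ring

lemma roundFactor_nonneg {n ℓ : ℕ} (hℓ : ℓ < n) : 0 ≤ roundFactor (n / 2) ℓ := by
  have hsub : ∑ k ∈ Ico (n / 2) ℓ, (1 : ℝ) / (k + 1) ≤
      ∑ k ∈ Ico (n / 2) (2 * (n / 2)), (1 : ℝ) / (k + 1) :=
    sum_le_sum_of_subset_of_nonneg (Ico_subset_Ico_right (by omega : ℓ ≤ 2 * (n / 2)))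
      fun _ _ _ => by positivity
  have hlog := log_two_lt_d9
  norm_num at hlog
  rw [roundFactor]
  linarith [sum_Ico_inv_le_log_two (n / 2)]

lemma one_sub_log_two_mul_le_sum_roundFactor (n : ℕ) :
    (1 - log 2) * n ≤ ∑ ℓ ∈ Ico (n / 2) n, roundFactor (n / 2) ℓ := by
  rw [sum_roundFactor (Nat.div_le_self n 2)]
  obtain ⟨p, rfl | rfl⟩ := Nat.even_or_odd' n
  · have hS := sum_Ico_inv_le_log_two p
    rw [show 2 * p / 2 = p by omega]
    push_cast
    nlinarith [(Nat.cast_nonneg p : (0 : ℝ) ≤ p)]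
  · have hS := sum_Ico_inv_le_log_two p
    rw [show (2 * p + 1) / 2 = p by omega, sum_Ico_succ_top (by omega)]
    push_cast
    have h1 : (2 * (p : ℝ) + 1) * (1 / (2 * p + 1)) = 1 := by field_simp
    nlinarith [(Nat.cast_nonneg p : (0 : ℝ) ≤ p)]

end Harmonic

section ProductWeights

variable {ι α : Type*} [Fintype ι] [DecidableEq ι] [Fintype α] {w : ι → α → ℝ}

lemma sum_prod_mul_prod (F : ι → α → ℝ) :
    ∑ R : ι → α, (∏ ℓ, w ℓ (R ℓ)) * ∏ ℓ, F ℓ (R ℓ) = ∏ ℓ, ∑ a, w ℓ a * F ℓ a := by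
  simp_rw [Fintype.prod_sum, prod_mul_distrib]

lemma sum_prod_mul_apply (hw : ∀ ℓ, ∑ a, w ℓ a = 1) (ℓ₀ : ι) (f : α → ℝ) :
    ∑ R : ι → α, (∏ ℓ, w ℓ (R ℓ)) * f (R ℓ₀) = ∑ a, w ℓ₀ a * f a := by
  have h := sum_prod_mul_prod (w := w) fun ℓ a => if ℓ = ℓ₀ then f a else 1
  simp only [Fintype.prod_ite_eq'] at h
  rw [h, Fintype.prod_eq_single ℓ₀ fun ℓ hℓ => by simp [hℓ, hw]]
  simp

lemma sum_prod_mul_apply_mul_apply (hw : ∀ ℓ, ∑ a, w ℓ a = 1) {ℓ₀ ℓ₁ : ι} (hne : ℓ₀ ≠ ℓ₁)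
    (f g : α → ℝ) :
    ∑ R : ι → α, (∏ ℓ, w ℓ (R ℓ)) * (f (R ℓ₀) * g (R ℓ₁))
      = (∑ a, w ℓ₀ a * f a) * ∑ a, w ℓ₁ a * g a := by
  have h := sum_prod_mul_prod (w := w)
    fun ℓ a => if ℓ = ℓ₀ then f a else if ℓ = ℓ₁ then g a else 1
  rw [Fintype.prod_eq_mul ℓ₀ ℓ₁ hne (fun ℓ hℓ => by simp [hℓ, hw])] at h
  simp only [if_pos, if_neg hne.symm] at h
  rw [← h]
  refine sum_congr rfl fun R _ => congrArg _ ?_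
  rw [Fintype.prod_eq_mul ℓ₀ ℓ₁ hne (fun ℓ hℓ => by simp [hℓ])]
  simp [hne.symm]

end ProductWeights

section RandomOrder

variable {n : ℕ}

lemma mem_QsetG {π : Perm (Fin n)} {ℓ : ℕ} {j : Fin n} :
    j ∈ QsetG n π ℓ ↔ ((π⁻¹ j : Fin n) : ℕ) < ℓ := by
  simp only [QsetG, mem_image, mem_filter, mem_univ, true_and]
  exact ⟨fun ⟨k, hk, hkj⟩ => by simpa [← hkj] using hk, fun h => ⟨π⁻¹ j, h, by simp⟩⟩

lemma QsetG_mul_swap (π : Perm (Fin n)) {a b : Fin n} {L : ℕ} (ha : (a : ℕ) < L)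
    (hb : (b : ℕ) < L) : QsetG n (π * swap a b) L = QsetG n π L := by
  ext j
  simp only [mem_QsetG, mul_inv_rev, swap_inv, Perm.mul_apply]
  rcases eq_or_ne (π⁻¹ j) a with h | h
  · simp [h, ha, hb]
  rcases eq_or_ne (π⁻¹ j) b with h' | h'
  · simp [h', ha, hb]
  · rw [swap_apply_of_ne_of_ne h h']

lemma card_QsetG (π : Perm (Fin n)) {L : ℕ} (hL : L ≤ n) : #(QsetG n π L) = L := by
  rw [QsetG, card_image_of_injective _ π.injective, Fin.card_filter_val_lt, min_eq_right hL]

lemma sum_perm_apply_eq_sum_mul_swap (H : Perm (Fin n) → Fin n → ℝ) (a b : Fin n) :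
    ∑ π : Perm (Fin n), H π (π a) = ∑ π : Perm (Fin n), H (π * swap a b) (π b) :=
  Fintype.sum_equiv (Equiv.mulRight (swap a b)) _ _ fun π => by simp

lemma card_mul_sum_perm_apply (g : Fin n → ℝ) (a : Fin n) :
    n * ∑ π : Perm (Fin n), g (π a) = n.factorial * ∑ j, g j := by
  have h : ∀ b, ∑ π : Perm (Fin n), g (π b) = ∑ π : Perm (Fin n), g (π a) := fun b =>
    sum_perm_apply_eq_sum_mul_swap (fun _ => g) b a
  calc (n : ℝ) * ∑ π : Perm (Fin n), g (π a) = ∑ b, ∑ π : Perm (Fin n), g (π b) := by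
        simp [h]
    _ = ∑ π : Perm (Fin n), ∑ j, g j := by
        rw [sum_comm]
        exact sum_congr rfl fun π _ => Equiv.sum_comp π g
    _ = n.factorial * ∑ j, g j := by simp [Fintype.card_perm]

variable {L : Fin n} {H : Perm (Fin n) → Fin n → ℝ}

lemma succ_mul_sum_perm_apply (hH : ∀ π a, a ≤ L → H (π * swap a L) = H π) :
    ((L : ℝ) + 1) * ∑ π : Perm (Fin n), H π (π L)
      = ∑ π : Perm (Fin n), ∑ j ∈ QsetG n π (L + 1), H π j := by
  have h : ∀ a ∈ univ.filter fun k : Fin n => (k : ℕ) < L + 1,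
      ∑ π : Perm (Fin n), H π (π a) = ∑ π : Perm (Fin n), H π (π L) := fun a ha => by
    rw [sum_perm_apply_eq_sum_mul_swap H a L]
    exact sum_congr rfl fun π _ => by
      rw [hH π a (Fin.le_def.2 (by simpa [Nat.lt_succ_iff] using ha))]
  simp only [QsetG]
  rw [sum_congr rfl fun π _ => sum_image fun _ _ _ _ hxy => π.injective hxy, sum_comm,
    sum_congr rfl h, sum_const, Fin.card_filter_val_lt, min_eq_right L.isLt, nsmul_eq_mul]
  push_cast
  ring

lemma sum_perm_apply_le_of_sum_QsetG_le {H' : Perm (Fin n) → Fin n → ℝ}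
    (hH : ∀ π a, a ≤ L → H (π * swap a L) = H π) (hH' : ∀ π a, a ≤ L → H' (π * swap a L) = H' π)
    (hle : ∀ π, ∑ j ∈ QsetG n π (L + 1), H' π j ≤ ∑ j ∈ QsetG n π (L + 1), H π j) :
    ∑ π : Perm (Fin n), H' π (π L) ≤ ∑ π : Perm (Fin n), H π (π L) := by
  refine le_of_mul_le_mul_left ?_ (by positivity : (0 : ℝ) < L + 1)
  rw [succ_mul_sum_perm_apply hH, succ_mul_sum_perm_apply hH']
  exact sum_le_sum fun π _ => hle π

end RandomOrder

section Algorithm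

variable {m n : ℕ}

def window (n t ℓ : ℕ) : Finset (Fin n) := univ.filter fun k => t ≤ (k : ℕ) ∧ (k : ℕ) < ℓ

@[simp]
lemma mem_window {t ℓ : ℕ} {k : Fin n} : k ∈ window n t ℓ ↔ t ≤ (k : ℕ) ∧ (k : ℕ) < ℓ := by
  simp [window]

lemma window_succ (t ℓ : ℕ) :
    window n t (ℓ + 1)
      = if h : t ≤ ℓ ∧ ℓ < n then insert ⟨ℓ, h.2⟩ (window n t ℓ) else window n t ℓ := by
  ext k
  split_ifs with h <;> simp only [mem_window, mem_insert, Fin.ext_iff] <;> omega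

lemma sum_window (t : ℕ) {ℓ : ℕ} (hℓ : ℓ ≤ n) (f : ℕ → ℝ) :
    ∑ k ∈ window n t ℓ, f k = ∑ k ∈ Ico t ℓ, f k := by
  have h : (window n t ℓ).map Fin.valEmbedding = Ico t ℓ := by
    ext k
    simp only [mem_map, mem_window, Fin.valEmbedding_apply, mem_Ico]
    exact ⟨fun ⟨k', hk', hk⟩ => hk ▸ hk', fun hk => ⟨⟨k, by omega⟩, hk, rfl⟩⟩
  rw [← h, sum_map]
  rfl

lemma sum_mul_ite_and_eq_add {X : Fin m → Fin n → ℝ} {i₀ : Fin m} {j₀ : Fin n} (h : X i₀ j₀ = 0)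
    (c : Fin n → ℝ) (i : Fin m) :
    ∑ j, c j * (if i = i₀ ∧ j = j₀ then 1 else X i j)
      = ∑ j, c j * X i j + if i = i₀ then c j₀ else 0 := by
  by_cases hi : i = i₀
  · subst hi
    have : ∀ j, (if j = j₀ then 1 else X i j) = X i j + if j = j₀ then 1 else 0 := fun j => by
      split_ifs with hj <;> simp [hj, h]
    simp [this, mul_add, sum_add_distrib]
  · simp [hi]

lemma gapVal_update (v : Fin m → Fin n → ℝ) {X : Fin m → Fin n → ℝ} {i₀ : Fin m} {j₀ : Fin n}
    (h : X i₀ j₀ = 0) :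
    gapVal m n v (fun i j => if i = i₀ ∧ j = j₀ then 1 else X i j) = gapVal m n v X + v i₀ j₀ := by
  simp only [gapVal, sum_mul_ite_and_eq_add h, sum_add_distrib]
  simp

variable (C : Fin m → ℝ) (s : Fin m → Fin n → ℝ) (t : ℕ) (π : Perm (Fin n))
  (R : Fin n → Option (Fin m))

lemma infAlg_apply_eq_zero {ℓ : ℕ} {j : Fin n} (hj : j ∉ QsetG n π ℓ) (i : Fin m) :
    infAlg m n C s t π R ℓ i j = 0 := by
  induction ℓ with
  | zero => rfl
  | succ ℓ ih =>
    rw [mem_QsetG] at hj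
    have ih := ih (by rw [mem_QsetG]; omega)
    have hjℓ : ∀ h : ℓ < n, j ≠ π ⟨ℓ, h⟩ := fun h hj' => by simp [hj'] at hj
    simp only [infAlg]
    split_ifs with h
    · cases R ⟨ℓ, h.2⟩ with
      | none => exact ih
      | some i₀ =>
        simp only [Option.elim]
        split_ifs <;> simp [hjℓ h.2, ih]
    · exact ih

noncomputable def proposedLoad (ℓ : ℕ) (i : Fin m) : ℝ :=
  ∑ k ∈ window n t ℓ, (if R k = some i then 1 else 0) * s i (π k)

lemma proposedLoad_nonneg (hs : ∀ i j, 0 < s i j) (ℓ : ℕ) (i : Fin m) :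
    0 ≤ proposedLoad s t π R ℓ i :=
  sum_nonneg fun k _ => mul_nonneg (by split_ifs <;> norm_num) (hs i (π k)).le

lemma proposedLoad_succ (ℓ : ℕ) (i : Fin m) :
    proposedLoad s t π R (ℓ + 1) i = proposedLoad s t π R ℓ i
      + if h : t ≤ ℓ ∧ ℓ < n then (if R ⟨ℓ, h.2⟩ = some i then 1 else 0) * s i (π ⟨ℓ, h.2⟩)
        else 0 := by
  rw [proposedLoad, proposedLoad, window_succ]
  by_cases h : t ≤ ℓ ∧ ℓ < n
  · rw [dif_pos h, dif_pos h, sum_insert fun hmem => by simp at hmem, add_comm]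
  · rw [dif_neg h, dif_neg h, add_zero]

lemma load_le_proposedLoad (hs : ∀ i j, 0 < s i j) (ℓ : ℕ) (i : Fin m) :
    ∑ j, s i j * infAlg m n C s t π R ℓ i j ≤ proposedLoad s t π R ℓ i := by
  induction ℓ with
  | zero => simp [infAlg, proposedLoad, window]
  | succ ℓ ih =>
    rw [proposedLoad_succ]
    simp only [infAlg]
    by_cases h : t ≤ ℓ ∧ ℓ < n
    · simp only [dif_pos h]
      have hcur := infAlg_apply_eq_zero C s t π R (ℓ := ℓ) (j := π ⟨ℓ, h.2⟩) (by simp [mem_QsetG])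
      have hs₀ := (hs i (π ⟨ℓ, h.2⟩)).le
      cases hR : R ⟨ℓ, h.2⟩ with
      | none => simpa using ih
      | some i₀ =>
        simp only [Option.elim, Option.some.injEq]
        by_cases hload : ∑ j, s i₀ j * infAlg m n C s t π R ℓ i₀ j ≤ C i₀
        · simp only [if_pos hload, sum_mul_ite_and_eq_add (hcur i₀)]
          by_cases hi : i = i₀
          · subst hi
            simp only [if_true, one_mul]
            linarith
          · simp only [hi, Ne.symm hi, if_false, zero_mul, add_zero]
            linarith
        · have : 0 ≤ (if i₀ = i then (1 : ℝ) else 0) * s i (π ⟨ℓ, h.2⟩) :=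
            mul_nonneg (by split_ifs <;> norm_num) hs₀
          simp only [if_neg hload]
          linarith
    · simpa [dif_neg h] using ih

variable (v : Fin m → Fin n → ℝ)

noncomputable def gain (ℓ : ℕ) : ℝ :=
  gapVal m n v (infAlg m n C s t π R (ℓ + 1)) - gapVal m n v (infAlg m n C s t π R ℓ)

lemma gapVal_infAlg_eq_sum_gain :
    gapVal m n v (infAlg m n C s t π R n) = ∑ ℓ : Fin n, gain C s t π R v ℓ := by
  rw [Fin.sum_univ_eq_sum_range (gain C s t π R v) n]
  unfold gain
  rw [sum_range_sub (fun ℓ => gapVal m n v (infAlg m n C s t π R ℓ))]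
  simp [gapVal, infAlg]

lemma gain_eq_zero_of_lt {ℓ : ℕ} (hℓ : ℓ < t) : gain C s t π R v ℓ = 0 := by
  simp [gain, infAlg, show ¬t ≤ ℓ by omega]

lemma sum_ite_mul_le_gain (hC : ∀ i, 0 < C i) (hs : ∀ i j, 0 < s i j) (hv : ∀ i j, 0 < v i j)
    (ℓ : Fin n) (hℓ : t ≤ ℓ) :
    ∑ i, (if R ℓ = some i then 1 else 0) * (v i (π ℓ) * (1 - proposedLoad s t π R ℓ i / C i))
      ≤ gain C s t π R v ℓ := by
  have hcur := infAlg_apply_eq_zero C s t π R (ℓ := ℓ) (j := π ℓ) (by simp [mem_QsetG])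
  rw [gain]
  simp only [infAlg, dif_pos (And.intro hℓ ℓ.isLt), Fin.eta]
  cases hR : R ℓ with
  | none => simp
  | some i₀ =>
    simp only [Option.elim, Option.some.injEq, ite_mul, one_mul, zero_mul, sum_ite_eq,
      mem_univ, if_true]
    have hP := load_le_proposedLoad C s t π R hs ℓ i₀
    have hP0 := proposedLoad_nonneg s t π R hs ℓ i₀
    have hv₀ := hv i₀ (π ℓ)
    have hC₀ := hC i₀
    split_ifs with hload
    · rw [gapVal_update v (hcur i₀), add_sub_cancel_left]
      have : 0 ≤ proposedLoad s t π R ℓ i₀ / C i₀ := div_nonneg hP0 hC₀.le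
      nlinarith
    · have : 1 < proposedLoad s t π R ℓ i₀ / C i₀ := by
        rw [one_lt_div hC₀]; linarith
      simp only [sub_self]
      nlinarith

end Algorithm

section Expectation

variable {m n : ℕ} {C : Fin m → ℝ} {s : Fin m → Fin n → ℝ} {xt : Finset (Fin n) → Fin m → Fin n → ℝ}
  {t : ℕ} {π : Perm (Fin n)}

/-- `x̃_{i,π(ℓ)}(Q_ℓ)`; rounds are 0-indexed, so `Q_ℓ` is `QsetG n π (ℓ + 1)`. -/
noncomputable def roundFrac (xt : Finset (Fin n) → Fin m → Fin n → ℝ) (π : Perm (Fin n))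
    (ℓ : Fin n) (i : Fin m) : ℝ :=
  xt (QsetG n π ((ℓ : ℕ) + 1)) i (π ℓ)

noncomputable def roundWeight (xt : Finset (Fin n) → Fin m → Fin n → ℝ) (t : ℕ)
    (π : Perm (Fin n)) (ℓ : Fin n) (a : Option (Fin m)) : ℝ :=
  if (ℓ : ℕ) < t then (if a = none then 1 else 0)
  else a.elim (1 - ∑ i, roundFrac xt π ℓ i) (roundFrac xt π ℓ)

lemma binWeight_eq_prod (R : Fin n → Option (Fin m)) :
    binWeight m n xt t π R = ∏ ℓ, roundWeight xt t π ℓ (R ℓ) := rfl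

lemma sum_roundWeight (ℓ : Fin n) : ∑ a, roundWeight xt t π ℓ a = 1 := by
  by_cases h : (ℓ : ℕ) < t <;> simp [roundWeight, Fintype.sum_option, h]

lemma roundWeight_some {ℓ : Fin n} (hℓ : t ≤ ℓ) (i : Fin m) :
    roundWeight xt t π ℓ (some i) = roundFrac xt π ℓ i := by
  simp [roundWeight, hℓ]

lemma roundWeight_nonneg (hfeas : ∀ Q, gapFeasibleOn m n C s (xt Q) Q) (ℓ : Fin n)
    (a : Option (Fin m)) : 0 ≤ roundWeight xt t π ℓ a := by
  by_cases h : (ℓ : ℕ) < t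
  · simp only [roundWeight, if_pos h]
    positivity
  · simp only [roundWeight, if_neg h]
    cases a with
    | none => simpa [roundFrac] using (hfeas _).2.2.1 (π ℓ)
    | some i => exact (hfeas _).1 i (π ℓ)

lemma binWeight_nonneg (hfeas : ∀ Q, gapFeasibleOn m n C s (xt Q) Q)
    (R : Fin n → Option (Fin m)) : 0 ≤ binWeight m n xt t π R :=
  prod_nonneg fun ℓ _ => roundWeight_nonneg hfeas ℓ (R ℓ)

lemma sum_binWeight_mul_ite {ℓ : Fin n} (hℓ : t ≤ ℓ) (i : Fin m) :
    ∑ R, binWeight m n xt t π R * (if R ℓ = some i then 1 else 0) = roundFrac xt π ℓ i := by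
  simp_rw [binWeight_eq_prod]
  rw [sum_prod_mul_apply sum_roundWeight ℓ fun a => if a = some i then 1 else 0]
  simp [roundWeight_some hℓ]

lemma sum_binWeight_mul_ite_mul_ite {ℓ k : Fin n} (hℓ : t ≤ ℓ) (hk : t ≤ k) (hne : ℓ ≠ k)
    (i : Fin m) :
    ∑ R, binWeight m n xt t π R
        * ((if R ℓ = some i then 1 else 0) * (if R k = some i then 1 else 0))
      = roundFrac xt π ℓ i * roundFrac xt π k i := by
  simp_rw [binWeight_eq_prod]
  rw [sum_prod_mul_apply_mul_apply sum_roundWeight hne (fun a => if a = some i then 1 else 0)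
    fun a => if a = some i then 1 else 0]
  simp [roundWeight_some hℓ, roundWeight_some hk]

lemma sum_roundFrac_le_sum_binWeight_mul_gain (hC : ∀ i, 0 < C i) (hs : ∀ i j, 0 < s i j)
    {v : Fin m → Fin n → ℝ} (hv : ∀ i j, 0 < v i j) (hfeas : ∀ Q, gapFeasibleOn m n C s (xt Q) Q)
    {ℓ : Fin n} (hℓ : t ≤ ℓ) :
    ∑ i, v i (π ℓ) * roundFrac xt π ℓ i
        * (1 - ∑ k ∈ window n t ℓ, s i (π k) * roundFrac xt π k i / C i)
      ≤ ∑ R, binWeight m n xt t π R * gain C s t π R v ℓ := by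
  have hwin : ∀ k ∈ window n t ℓ, t ≤ (k : ℕ) ∧ ℓ ≠ k := fun k hk =>
    ⟨(mem_window.1 hk).1, fun h => by simp [h] at hk⟩
  calc ∑ i, v i (π ℓ) * roundFrac xt π ℓ i
          * (1 - ∑ k ∈ window n t ℓ, s i (π k) * roundFrac xt π k i / C i)
      = ∑ i, (v i (π ℓ) * ∑ R, binWeight m n xt t π R * (if R ℓ = some i then 1 else 0)
          - ∑ k ∈ window n t ℓ, v i (π ℓ) * s i (π k) / C i * ∑ R, binWeight m n xt t π R *
            ((if R ℓ = some i then 1 else 0) * (if R k = some i then 1 else 0))) := by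
        refine sum_congr rfl fun i _ => ?_
        rw [sum_binWeight_mul_ite hℓ, mul_sub, mul_one, mul_sum]
        congr 1
        refine sum_congr rfl fun k hk => ?_
        rw [sum_binWeight_mul_ite_mul_ite hℓ (hwin k hk).1 (hwin k hk).2]
        ring
    _ = ∑ R, binWeight m n xt t π R * ∑ i, (if R ℓ = some i then 1 else 0)
          * (v i (π ℓ) * (1 - proposedLoad s t π R ℓ i / C i)) := by
        simp only [proposedLoad, mul_sum, sum_div, mul_sub, sum_sub_distrib, mul_one]
        congr 1
        · rw [sum_comm]
          exact sum_congr rfl fun R _ => sum_congr rfl fun i _ => by ring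
        · refine (sum_congr rfl fun i _ => sum_comm).trans (sum_comm.trans ?_)
          exact sum_congr rfl fun R _ => sum_congr rfl fun i _ => sum_congr rfl fun k _ => by ring
    _ ≤ ∑ R, binWeight m n xt t π R * gain C s t π R v ℓ :=
        sum_le_sum fun R _ => mul_le_mul_of_nonneg_left
          (sum_ite_mul_le_gain C s t π R v hC hs hv ℓ hℓ) (binWeight_nonneg hfeas R)

end Expectation

section RandomOrderBounds

variable {m n : ℕ} {C : Fin m → ℝ} {s : Fin m → Fin n → ℝ}

lemma gapFeasibleOn_restrict (hs : ∀ i j, 0 < s i j) {x : Fin m → Fin n → ℝ}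
    (hx : gapFeasibleOn m n C s x univ) (Q : Finset (Fin n)) :
    gapFeasibleOn m n C s (fun i j => if j ∈ Q then x i j else 0) Q := by
  obtain ⟨h0, hcap, hone, -⟩ := hx
  have hle : ∀ i j, (if j ∈ Q then x i j else 0) ≤ x i j := fun i j => by
    split_ifs
    exacts [le_rfl, h0 i j]
  refine ⟨fun i j => ?_,
    fun i => (sum_le_sum fun j _ => mul_le_mul_of_nonneg_left (hle i j) (hs i j).le).trans (hcap i),
    fun j => (sum_le_sum fun i _ => hle i j).trans (hone j), fun i j hj => if_neg hj⟩
  dsimp only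
  split_ifs
  exacts [h0 i j, le_rfl]

lemma gapVal_eq_sum_of_eq_zero (v : Fin m → Fin n → ℝ) {x : Fin m → Fin n → ℝ}
    {Q : Finset (Fin n)} (hx : ∀ i j, j ∉ Q → x i j = 0) :
    gapVal m n v x = ∑ j ∈ Q, ∑ i, v i j * x i j := by
  rw [gapVal, sum_comm, ← sum_subset (subset_univ Q) fun j _ hj => sum_eq_zero fun i _ => by
    rw [hx i j hj, mul_zero]]

variable {v : Fin m → Fin n → ℝ} {xt : Finset (Fin n) → Fin m → Fin n → ℝ}

lemma factorial_div_mul_gapVal_le (hs : ∀ i j, 0 < s i j)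
    (hxt : ∀ Q : Finset (Fin n), gapFeasibleOn m n C s (xt Q) Q ∧
      (∀ y, gapFeasibleOn m n C s y Q → gapVal m n v y ≤ gapVal m n v (xt Q)))
    {xstar : Fin m → Fin n → ℝ} (hstar : gapFeasibleOn m n C s xstar univ) (ℓ : Fin n) :
    n.factorial / n * gapVal m n v xstar
      ≤ ∑ π : Perm (Fin n), ∑ i, v i (π ℓ) * roundFrac xt π ℓ i := by
  set w : Fin n → ℝ := fun j => ∑ i, v i j * xstar i j
  have hn : (n : ℝ) ≠ 0 := by exact_mod_cast (Fin.pos ℓ).ne'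
  have hw : n.factorial / n * gapVal m n v xstar = ∑ π : Perm (Fin n), w (π ℓ) := by
    rw [gapVal_eq_sum_of_eq_zero v (Q := univ) (by simp), div_mul_eq_mul_div, div_eq_iff hn,
      ← card_mul_sum_perm_apply w ℓ, mul_comm]
  rw [hw]
  refine sum_perm_apply_le_of_sum_QsetG_le (H' := fun _ => w)
    (H := fun π j => ∑ i, v i j * xt (QsetG n π (ℓ + 1)) i j)
    (fun π a ha => by simp only [QsetG_mul_swap π (Nat.lt_succ_of_le ha) (Nat.lt_succ_self ℓ)])
    (fun _ _ _ => rfl) fun π => ?_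
  set Q := QsetG n π (ℓ + 1)
  calc ∑ j ∈ Q, w j = gapVal m n v fun i j => if j ∈ Q then xstar i j else 0 := by
        rw [gapVal_eq_sum_of_eq_zero v (Q := Q) fun i j hj => if_neg hj]
        exact sum_congr rfl fun j hj => by simp [w, hj]
    _ ≤ gapVal m n v (xt Q) := (hxt Q).2 _ (gapFeasibleOn_restrict hs hstar Q)
    _ = ∑ j ∈ Q, ∑ i, v i j * xt Q i j := gapVal_eq_sum_of_eq_zero v (hxt Q).1.2.2.2

lemma sum_perm_mul_roundFrac_le (hC : ∀ i, 0 < C i) (hs : ∀ i j, 0 < s i j) (hv : ∀ i j, 0 < v i j)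
    (hfeas : ∀ Q, gapFeasibleOn m n C s (xt Q) Q) {ℓ k : Fin n} (hkℓ : k < ℓ) :
    ∑ π : Perm (Fin n), ∑ i,
        v i (π ℓ) * roundFrac xt π ℓ i * (s i (π k) * roundFrac xt π k i / C i)
      ≤ (∑ π : Perm (Fin n), ∑ i, v i (π ℓ) * roundFrac xt π ℓ i) / (k + 1) := by
  have hinv : ∀ (π : Perm (Fin n)) a, a ≤ k → ∀ i,
      v i ((π * swap a k) ℓ) * roundFrac xt (π * swap a k) ℓ i = v i (π ℓ) * roundFrac xt π ℓ i :=
    fun π a ha i => by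
      have hfix : (π * swap a k) ℓ = π ℓ := by
        rw [Perm.mul_apply, swap_apply_of_ne_of_ne (by rintro rfl; exact absurd hkℓ ha.not_gt)
          hkℓ.ne']
      rw [roundFrac, roundFrac, hfix, QsetG_mul_swap π (by omega) (by omega)]
  rw [sum_div]
  -- Given `Q_{k+1}`, `Q_{ℓ+1}` and `π ℓ`, the item `π k` is uniform on `Q_{k+1}`.
  refine sum_perm_apply_le_of_sum_QsetG_le (L := k)
    (H' := fun π j => ∑ i, v i (π ℓ) * roundFrac xt π ℓ i
      * (s i j * xt (QsetG n π (k + 1)) i j / C i))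
    (H := fun π _ => (∑ i, v i (π ℓ) * roundFrac xt π ℓ i) / (k + 1))
    (fun π a ha => by simp only [hinv π a ha])
    (fun π a ha => by simp only [hinv π a ha, QsetG_mul_swap π (Nat.lt_succ_of_le ha)
      (Nat.lt_succ_self k)]) fun π => ?_
  set Q := QsetG n π (k + 1)
  have hQ : ∑ _j ∈ Q, (∑ i, v i (π ℓ) * roundFrac xt π ℓ i) / (k + 1)
      = ∑ i, v i (π ℓ) * roundFrac xt π ℓ i := by
    rw [sum_const, card_QsetG π k.isLt, nsmul_eq_mul]
    push_cast
    field_simp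
  rw [hQ, sum_comm]
  refine sum_le_sum fun i _ => ?_
  rw [← mul_sum]
  refine mul_le_of_le_one_right (mul_nonneg (hv i _).le ((hfeas _).1 i _)) ?_
  rw [← sum_div, div_le_one (hC i)]
  exact (sum_le_sum_of_subset_of_nonneg (subset_univ Q) fun j _ _ =>
    mul_nonneg ((hs i j).le) ((hfeas Q).1 i j)).trans ((hfeas Q).2.1 i)

end RandomOrderBounds

lemma roundFactor_mul_le_sum_binWeight_mul_gain {m n : ℕ} {C : Fin m → ℝ} (hC : ∀ i, 0 < C i)
    {s v : Fin m → Fin n → ℝ} (hs : ∀ i j, 0 < s i j) (hv : ∀ i j, 0 < v i j)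
    {xt : Finset (Fin n) → Fin m → Fin n → ℝ}
    (hxt : ∀ Q : Finset (Fin n), gapFeasibleOn m n C s (xt Q) Q ∧
      (∀ y, gapFeasibleOn m n C s y Q → gapVal m n v y ≤ gapVal m n v (xt Q)))
    {xstar : Fin m → Fin n → ℝ} (hstar : gapFeasibleOn m n C s xstar univ)
    {t : ℕ} {ℓ : Fin n} (hℓ : t ≤ ℓ) (hrf : 0 ≤ roundFactor t ℓ) :
    roundFactor t ℓ * (n.factorial / n * gapVal m n v xstar)
      ≤ ∑ π : Perm (Fin n), ∑ R, binWeight m n xt t π R * gain C s t π R v ℓ := by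
  have hfeas := fun Q => (hxt Q).1
  set T := ∑ π : Perm (Fin n), ∑ i, v i (π ℓ) * roundFrac xt π ℓ i
  calc roundFactor t ℓ * (n.factorial / n * gapVal m n v xstar)
      ≤ roundFactor t ℓ * T :=
        mul_le_mul_of_nonneg_left (factorial_div_mul_gapVal_le hs hxt hstar ℓ) hrf
    _ = T - ∑ k ∈ window n t ℓ, T / ((k : ℕ) + 1) := by
        rw [roundFactor, ← sum_window t ℓ.isLt.le, sub_mul, one_mul, sum_mul]
        simp only [one_div_mul_eq_div]
    _ ≤ T - ∑ k ∈ window n t ℓ, ∑ π : Perm (Fin n), ∑ i,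
          v i (π ℓ) * roundFrac xt π ℓ i * (s i (π k) * roundFrac xt π k i / C i) :=
        sub_le_sub_left (sum_le_sum fun k hk =>
          sum_perm_mul_roundFrac_le hC hs hv hfeas (mem_window.1 hk).2) T
    _ = ∑ π : Perm (Fin n), ∑ i, v i (π ℓ) * roundFrac xt π ℓ i
          * (1 - ∑ k ∈ window n t ℓ, s i (π k) * roundFrac xt π k i / C i) := by
        simp only [mul_sub, mul_one, mul_sum, sum_sub_distrib, T]
        congr 1
        rw [sum_comm]
        exact sum_congr rfl fun π _ => sum_comm
    _ ≤ ∑ π : Perm (Fin n), ∑ R, binWeight m n xt t π R * gain C s t π R v ℓ :=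
        sum_le_sum fun π _ => sum_roundFrac_le_sum_binWeight_mul_gain hC hs hv hfeas hℓ

/-- Let `x` be the output of Algorithm `InfeasibleGAP` with sample
size `t = ⌊n/2⌋`, where the permutation `π` of `[n]` is uniformly random and,
conditionally on `π`, the bin choices are independent with
`P(R_ℓ = i) = x̃_{i,π(ℓ)}(Q_ℓ)` and `P(R_ℓ = 0) = 1 − Σ_i x̃_{i,π(ℓ)}(Q_ℓ)`.
Then `E[v(x)] ≥ (1 − ln 2) · v(x*)`, where `x*` is an optimal integral feasible
assignment. The expectation is written as an explicit average over all permutations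
and all choice vectors weighted by their probabilities. -/
theorem gap_infeasible_expected_value
    (m n : ℕ) (C : Fin m → ℝ) (hC : ∀ i, 0 < C i)
    (s v : Fin m → Fin n → ℝ)
    (hs : ∀ i j, 0 < s i j ∧ s i j ≤ C i) (hv : ∀ i j, 0 < v i j)
    (xt : Finset (Fin n) → Fin m → Fin n → ℝ)
    (hxt : ∀ Q : Finset (Fin n), gapFeasibleOn m n C s (xt Q) Q ∧
      (∀ y, gapFeasibleOn m n C s y Q → gapVal m n v y ≤ gapVal m n v (xt Q)))
    (xstar : Fin m → Fin n → ℝ)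
    (hstar : gapFeasibleOn m n C s xstar Finset.univ ∧ gapIntegral m n xstar ∧
      (∀ y, gapFeasibleOn m n C s y Finset.univ → gapIntegral m n y →
        gapVal m n v y ≤ gapVal m n v xstar)) :
    (∑ π : Equiv.Perm (Fin n), ∑ R : Fin n → Option (Fin m),
        binWeight m n xt (n / 2) π R
          * gapVal m n v (infAlg m n C s (n / 2) π R n)) / (n.factorial : ℝ)
      ≥ (1 - Real.log 2) * gapVal m n v xstar := by
  rcases n.eq_zero_or_pos with rfl | hn
  · simp [gapVal]
  have hs_pos := fun i j => (hs i j).1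
  set c := n.factorial / n * gapVal m n v xstar
  have hc : 0 ≤ c := mul_nonneg (by positivity) (sum_nonneg fun i _ => sum_nonneg fun j _ =>
    mul_nonneg (hv i j).le (hstar.1.1 i j))
  set E := fun ℓ : Fin n => ∑ π : Equiv.Perm (Fin n), ∑ R,
    binWeight m n xt (n / 2) π R * gain C s (n / 2) π R v ℓ
  rw [ge_iff_le, le_div_iff₀ (by positivity)]
  calc (1 - Real.log 2) * gapVal m n v xstar * n.factorial = (1 - Real.log 2) * n * c := by
        simp only [c]
        field_simp
    _ ≤ (∑ ℓ ∈ Ico (n / 2) n, roundFactor (n / 2) ℓ) * c :=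
        mul_le_mul_of_nonneg_right (one_sub_log_two_mul_le_sum_roundFactor n) hc
    _ = ∑ ℓ ∈ window n (n / 2) n, roundFactor (n / 2) ℓ * c := by
        rw [sum_window _ le_rfl (fun ℓ => roundFactor (n / 2) ℓ * c), sum_mul]
    _ ≤ ∑ ℓ ∈ window n (n / 2) n, E ℓ :=
        sum_le_sum fun ℓ hℓ => roundFactor_mul_le_sum_binWeight_mul_gain hC hs_pos hv hxt
          hstar.1 (mem_window.1 hℓ).1 (roundFactor_nonneg ℓ.isLt)
    _ = ∑ ℓ, E ℓ :=
        sum_subset (subset_univ _) fun ℓ _ hℓ => sum_eq_zero fun π _ => sum_eq_zero fun R _ => by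
          rw [gain_eq_zero_of_lt C s _ π R v (by simpa using hℓ), mul_zero]
    _ = _ := by
        simp only [E, gapVal_infAlg_eq_sum_gain, mul_sum]
        rw [sum_comm]
        exact sum_congr rfl fun π _ => sum_comm
end
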